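/- arXiv:2209.14110 — 2 statements merged into one kernel-verified Lean document; each statement's English description precedes it below -/
import Mathlib

section
/- Consider an n-player game with convex compact strategy sets X_k and utilities u_k. Suppose the game is (λ, μ)-smooth with respect to a positive weight vector α ∈ R^n (i.e., there exists a strategy profile x* such that Σ_k α_k u_k(x*_k, x_{−k}) ≥ λ·OPT_α − μ·SW_α(x) for all profiles x, where SW_α(x) := Σ_k α_k u_k(x) and OPT_α := max_x SW_α(x)). If over m iterations with strategy profiles x^(1), ..., x^(m) each player k has weighted regret Σ_{i=1}^m α_k( u_k(x*_k, x^(i)_{−k}) − u_k(x^(i)) ) ≤ α_k R_k, then (1/m) Σ_{i=1}^m SW_α(x^(i)) ≥ (λ/(1+μ))·OPT_α − (1/(1+μ))·(1/m) Σ_k α_k R_k. -/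
/-!
Summing the smoothness inequality over the iterates bounds `m · λ · OPT_α - μ · Σᵢ SW_α(xⁱ)`
by the total welfare of the deviations to `x*`, and by the regret bounds that total is at most
`Σₖ αₖ Rₖ + Σᵢ SW_α(xⁱ)`. Rearranging and dividing by `m (1 + μ)` gives the claim.
-/

open Finset

namespace SmoothGame

variable {ι τ : Type*} [Fintype ι] [DecidableEq ι] [Fintype τ] {S : ι → Type*}

def welfare (α : ι → ℝ) (u : ι → (∀ k, S k) → ℝ) (x : ∀ k, S k) : ℝ :=
  ∑ k, α k * u k x

def deviationWelfare (α : ι → ℝ) (u : ι → (∀ k, S k) → ℝ) (x' x : ∀ k, S k) : ℝ :=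
  ∑ k, α k * u k (Function.update x k (x' k))

theorem sum_deviationWelfare_le {α R : ι → ℝ} {u : ι → (∀ k, S k) → ℝ} {x' : ∀ k, S k}
    {xp : τ → ∀ k, S k}
    (hreg : ∀ k, ∑ i, α k * (u k (Function.update (xp i) k (x' k)) - u k (xp i)) ≤ α k * R k) :
    ∑ i, deviationWelfare α u x' (xp i) ≤ ∑ k, α k * R k + ∑ i, welfare α u (xp i) :=
  calc ∑ i, deviationWelfare α u x' (xp i)
      = ∑ k, ∑ i, α k * (u k (Function.update (xp i) k (x' k)) - u k (xp i)) +
          ∑ i, welfare α u (xp i) := by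
        simp only [deviationWelfare, welfare, mul_sub, sum_sub_distrib]
        rw [sum_comm (f := fun k i => α k * u k (Function.update (xp i) k (x' k))),
          sum_comm (f := fun k i => α k * u k (xp i))]
        ring
    _ ≤ ∑ k, α k * R k + ∑ i, welfare α u (xp i) := by
        gcongr with k
        exact hreg k

theorem card_mul_le_regret_add_welfare {α R : ι → ℝ} {u : ι → (∀ k, S k) → ℝ}
    {x' : ∀ k, S k} {xp : τ → ∀ k, S k} {lam μ OPT : ℝ}
    (hsmooth : ∀ x, lam * OPT - μ * welfare α u x ≤ deviationWelfare α u x' x)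
    (hreg : ∀ k, ∑ i, α k * (u k (Function.update (xp i) k (x' k)) - u k (xp i)) ≤ α k * R k) :
    Fintype.card τ * (lam * OPT) ≤ ∑ k, α k * R k + (1 + μ) * ∑ i, welfare α u (xp i) := by
  have hsum := sum_le_sum fun i (_ : i ∈ univ) => hsmooth (xp i)
  rw [sum_sub_distrib, sum_const, ← mul_sum, nsmul_eq_mul, card_univ] at hsum
  linarith [sum_deviationWelfare_le hreg]

theorem le_average_of_card_mul_le {m lam μ OPT Rs T : ℝ} (hm : 0 < m) (hμ : 0 < 1 + μ)
    (h : m * (lam * OPT) ≤ Rs + (1 + μ) * T) :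
    lam / (1 + μ) * OPT - 1 / (1 + μ) * (1 / m * Rs) ≤ 1 / m * T := by
  have key : lam / (1 + μ) * OPT - 1 / (1 + μ) * (1 / m * Rs) =
      1 / m * T - (Rs + (1 + μ) * T - m * (lam * OPT)) / (m * (1 + μ)) := by
    field_simp
    ring
  rw [key, sub_le_self_iff]
  exact div_nonneg (by linarith) (by positivity)

end SmoothGame

theorem smooth_game_welfare_general {n m : ℕ} (hm : 1 ≤ m)
    (S : Fin n → Type*) (u : Fin n → (∀ k, S k) → ℝ)
    (α : Fin n → ℝ)
    (lam μ : ℝ) (hμ : 0 < μ)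
    (OPTα : ℝ)
    (xstar : ∀ k, S k)
    (hsmooth : ∀ x : ∀ k, S k,
      lam * OPTα - μ * (∑ k, α k * u k x) ≤
        ∑ k, α k * u k (Function.update x k (xstar k)))
    (xp : Fin m → ∀ k, S k) (R : Fin n → ℝ)
    (hreg : ∀ k, (∑ i, α k * (u k (Function.update (xp i) k (xstar k)) - u k (xp i)))
      ≤ α k * R k) :
    (lam / (1 + μ)) * OPTα - (1 / (1 + μ)) * ((1 / m) * ∑ k, α k * R k) ≤
      (1 / m) * ∑ i, ∑ k, α k * u k (xp i) := by
  have key := SmoothGame.card_mul_le_regret_add_welfare (u := u) hsmooth hreg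
  rw [Fintype.card_fin] at key
  exact SmoothGame.le_average_of_card_mul_le (by exact_mod_cast hm) (by linarith) key

/-- In a `(λ, μ)`-smooth game with respect to weights `α`, if each player's weighted
regret against the smoothness deviation is bounded, then the average weighted social
welfare is at least the robust-price-of-anarchy fraction of `OPT_α` minus the average
weighted regret divided by `1 + μ`. -/
theorem smooth_game_welfare {n m : ℕ} (hm : 1 ≤ m)
    (S : Fin n → Type*) (u : Fin n → (∀ k, S k) → ℝ)
    (α : Fin n → ℝ) (hα : ∀ k, 0 < α k)
    (lam μ : ℝ) (hlam : 0 < lam) (hμ : 0 < μ)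
    (OPTα : ℝ)
    (hOPT : ∀ x : ∀ k, S k, (∑ k, α k * u k x) ≤ OPTα)
    (hOPTmem : ∃ x : ∀ k, S k, (∑ k, α k * u k x) = OPTα)
    (xstar : ∀ k, S k)
    (hsmooth : ∀ x : ∀ k, S k,
      lam * OPTα - μ * (∑ k, α k * u k x) ≤
        ∑ k, α k * u k (Function.update x k (xstar k)))
    (xp : Fin m → ∀ k, S k) (R : Fin n → ℝ)
    (hreg : ∀ k, (∑ i, α k * (u k (Function.update (xp i) k (xstar k)) - u k (xp i)))
      ≤ α k * R k) :
    (lam / (1 + μ)) * OPTα - (1 / (1 + μ)) * ((1 / m) * ∑ k, α k * R k) ≤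
      (1 / m) * ∑ i, ∑ k, α k * u k (xp i) :=
  smooth_game_welfare_general hm S u α lam μ hμ OPTα xstar hsmooth xp R hreg
end

section
/- Let V(x, y) = (x^T R y)/(x^T S y) be Von Neumann's ratio game, where R, S ∈ R^{d_x × d_y}, x ∈ Δ^{d_x}, y ∈ Δ^{d_y}, and x^T S y ≥ ζ > 0 for all feasible (x, y). Then for any x, x* ∈ Δ^{d_x} and y ∈ Δ^{d_y}: V(x, y) − V(x*, y) = α(x, x*, y) · ⟨x − x*, ∇_x V(x, y)⟩, where α(x, x*, y) := (x^T S y)/((x*)^T S y) and ∇_x V(x, y) = [R y (x^T S y) − S y (x^T R y)] / (x^T S y)². -/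
open Matrix

/-! With `a = xᵀRy`, `b = xᵀSy`, `c = x*ᵀRy`, `d = x*ᵀSy`, the left side is `(ad - bc)/(bd)`.
The function `V(·, y)` is homogeneous of degree `0`, so `⟨x, ∇ₓV(x, y)⟩ = 0` and
`⟨x - x*, ∇ₓV(x, y)⟩ = -⟨x*, ∇ₓV(x, y)⟩ = (ad - bc)/b²`; the two differ by the factor `b/d`. -/

section RatioGradient

variable {ι 𝕜 : Type*} [Fintype ι] [Field 𝕜]

/-- The gradient of `u ↦ (u ⬝ᵥ r) / (u ⬝ᵥ s)` at `u`, by the quotient rule. -/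
def ratioGrad (r s u : ι → 𝕜) : ι → 𝕜 :=
  ((u ⬝ᵥ s) ^ 2)⁻¹ • ((u ⬝ᵥ s) • r - (u ⬝ᵥ r) • s)

theorem sub_dotProduct_ratioGrad (r s u v : ι → 𝕜) :
    (u - v) ⬝ᵥ ratioGrad r s u =
      ((u ⬝ᵥ r) * (v ⬝ᵥ s) - (u ⬝ᵥ s) * (v ⬝ᵥ r)) / (u ⬝ᵥ s) ^ 2 := by
  simp only [ratioGrad, dotProduct_smul, dotProduct_sub, sub_dotProduct, smul_eq_mul,
    dotProduct_comm u, dotProduct_comm v]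
  ring

end RatioGradient

theorem div_sub_div_eq_div_mul_div_sq {K : Type*} [Field K] (a c : K) {b d : K}
    (hb : b ≠ 0) (hd : d ≠ 0) :
    a / b - c / d = b / d * ((a * d - b * c) / b ^ 2) := by
  field_simp

theorem ratio_game_gradient_identity_general {dx dy : ℕ}
    (R S : Matrix (Fin dx) (Fin dy) ℝ) (ζ : ℝ) (hζ : 0 < ζ)
    (x xstar : Fin dx → ℝ) (y : Fin dy → ℝ)
    (hxS : ζ ≤ x ⬝ᵥ S.mulVec y) (hxstarS : ζ ≤ xstar ⬝ᵥ S.mulVec y)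
    (g : Fin dx → ℝ)
    (hg : g = ((x ⬝ᵥ S.mulVec y) ^ 2)⁻¹ •
        ((x ⬝ᵥ S.mulVec y) • R.mulVec y - (x ⬝ᵥ R.mulVec y) • S.mulVec y)) :
    (x ⬝ᵥ R.mulVec y) / (x ⬝ᵥ S.mulVec y) -
        (xstar ⬝ᵥ R.mulVec y) / (xstar ⬝ᵥ S.mulVec y) =
      ((x ⬝ᵥ S.mulVec y) / (xstar ⬝ᵥ S.mulVec y)) * ((x - xstar) ⬝ᵥ g) := by
  have hg' : g = ratioGrad (R *ᵥ y) (S *ᵥ y) x := hg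
  rw [hg', sub_dotProduct_ratioGrad]
  exact div_sub_div_eq_div_mul_div_sq _ _ (hζ.trans_le hxS).ne' (hζ.trans_le hxstarS).ne'

/-- Gradient-difference identity for Von Neumann's ratio game:
`V(x,y) − V(x*,y) = α(x,x*,y)·⟨x − x*, ∇_x V(x,y)⟩` with
`α(x,x*,y) = (xᵀS y)/((x*)ᵀS y)`. -/
theorem ratio_game_gradient_identity {dx dy : ℕ}
    (R S : Matrix (Fin dx) (Fin dy) ℝ) (ζ : ℝ) (hζ : 0 < ζ)
    (x xstar : Fin dx → ℝ) (y : Fin dy → ℝ)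
    (hx : x ∈ stdSimplex ℝ (Fin dx)) (hxstar : xstar ∈ stdSimplex ℝ (Fin dx))
    (hy : y ∈ stdSimplex ℝ (Fin dy))
    (hxS : ζ ≤ x ⬝ᵥ S.mulVec y) (hxstarS : ζ ≤ xstar ⬝ᵥ S.mulVec y)
    (g : Fin dx → ℝ)
    (hg : g = ((x ⬝ᵥ S.mulVec y) ^ 2)⁻¹ •
        ((x ⬝ᵥ S.mulVec y) • R.mulVec y - (x ⬝ᵥ R.mulVec y) • S.mulVec y)) :
    (x ⬝ᵥ R.mulVec y) / (x ⬝ᵥ S.mulVec y) -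
        (xstar ⬝ᵥ R.mulVec y) / (xstar ⬝ᵥ S.mulVec y) =
      ((x ⬝ᵥ S.mulVec y) / (xstar ⬝ᵥ S.mulVec y)) * ((x - xstar) ⬝ᵥ g) :=
  ratio_game_gradient_identity_general R S ζ hζ x xstar y hxS hxstarS g hg
end
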